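/- arXiv:2508.15296 — 7 statements merged into one kernel-verified Lean document; each statement's English description precedes it below -/
import Mathlib

section
/- For every finite simple graph G on a set I of at least two students that is not a complete graph, there exists a matching market with student acquaintance graph G and two feasible locally envy-free matchings Y1 and Y2 such that no feasible locally envy-free matching Pareto dominates or equals both Y1 and Y2; consequently, the set of feasible locally envy-free matchings, partially ordered by Y ≤ Y' iff Y' Pareto dominates Y or Y' = Y, is not a lattice. -/
section Defs

variable {I S : Type*}

/-- Students' preference profiles: `pI i a b` means student `i` strictly prefers option `a`
to option `b`, where `none` represents being unmatched. -/
abbrev StudentPrefs (I S : Type*) := I → Option S → Option S → Prop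

/-- Schools' preference profiles: `pS s a b` means school `s` strictly prefers `a` to `b`,
where `none` represents leaving a seat vacant. -/
abbrev SchoolPrefs (I S : Type*) := S → Option I → Option I → Prop

/-- Each student's preference is a strict linear order on `S ∪ {∅}`. -/
def ValidStudentPrefs (pI : StudentPrefs I S) : Prop :=
  ∀ i, IsStrictTotalOrder (Option S) (pI i)

/-- Each school's preference is a strict linear order on `I ∪ {∅}`. -/
def ValidSchoolPrefs (pS : SchoolPrefs I S) : Prop :=
  ∀ s, IsStrictTotalOrder (Option I) (pS s)

/-- A matching `μ : I → Option S` is feasible if each school's quota is respected. -/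
def Feasible (q : S → ℕ) (μ : I → Option S) : Prop :=
  ∀ s : S, {i | μ i = some s}.ncard ≤ q s

/-- Student `i` has justified envy toward student `i'` in matching `μ`. -/
def JEnvy (pI : StudentPrefs I S) (pS : SchoolPrefs I S)
    (μ : I → Option S) (i i' : I) : Prop :=
  ∃ s : S, μ i' = some s ∧ pI i (some s) (μ i) ∧ pS s (some i) (some i')

/-- Local envy: justified envy toward a neighbor in the student acquaintance graph `G`. -/
def LocalEnvy (G : SimpleGraph I) (pI : StudentPrefs I S) (pS : SchoolPrefs I S)
    (μ : I → Option S) (i i' : I) : Prop :=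
  JEnvy pI pS μ i i' ∧ G.Adj i i'

/-- Locally envy-free matching. -/
def LEF (G : SimpleGraph I) (pI : StudentPrefs I S) (pS : SchoolPrefs I S)
    (μ : I → Option S) : Prop :=
  ∀ i i', ¬ LocalEnvy G pI pS μ i i'

/-- Fair (justified-envy-free) matching. -/
def Fair (pI : StudentPrefs I S) (pS : SchoolPrefs I S) (μ : I → Option S) : Prop :=
  ∀ i i', ¬ JEnvy pI pS μ i i'

/-- Locally envy-free up to `k` peers: every student has local envy toward at most `k` students. -/
def LocEF (G : SimpleGraph I) (pI : StudentPrefs I S) (pS : SchoolPrefs I S)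
    (k : ℕ) (μ : I → Option S) : Prop :=
  ∀ i, {i' | LocalEnvy G pI pS μ i i'}.ncard ≤ k

/-- Locally envy-receiving-free up to `k` peers: for every student at most `k` students
have local envy toward her. -/
def LocERF (G : SimpleGraph I) (pI : StudentPrefs I S) (pS : SchoolPrefs I S)
    (k : ℕ) (μ : I → Option S) : Prop :=
  ∀ i, {i' | LocalEnvy G pI pS μ i' i}.ncard ≤ k

/-- `μ'` Pareto dominates `μ`. -/
def Dominates (pI : StudentPrefs I S) (μ' μ : I → Option S) : Prop :=
  (∀ i, μ' i = μ i ∨ pI i (μ' i) (μ i)) ∧ (∃ i, pI i (μ' i) (μ i))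

/-- A feasible matching is Pareto efficient if no feasible matching Pareto dominates it. -/
def ParetoEfficient (pI : StudentPrefs I S) (q : S → ℕ) (μ : I → Option S) : Prop :=
  ∀ μ', Feasible q μ' → ¬ Dominates pI μ' μ

/-- `(i, s)` is a mutually-best pair. -/
def MBPair (pI : StudentPrefs I S) (pS : SchoolPrefs I S) (i : I) (s : S) : Prop :=
  (∀ x : Option S, x ≠ some s → pI i (some s) x) ∧
  (∀ y : Option I, y ≠ some i → pS s (some i) y)

/-- A matching is mutually-best if every mutually-best pair is matched. -/
def MutuallyBest (pI : StudentPrefs I S) (pS : SchoolPrefs I S) (μ : I → Option S) : Prop :=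
  ∀ i s, MBPair pI pS i s → μ i = some s

/-- The set of the `m` most-preferred elements under a strict order `r`
(`r j i` meaning `j` is strictly preferred to `i`). -/
def topSet (r : I → I → Prop) (m : ℕ) : Set I := {i | {j | r j i}.ncard < m}

/-- A strict linear order on `I` is single-peaked on the graph `G` if for each
`m ∈ {1, …, |I|}` the set of the `m` most-preferred elements induces a connected
subgraph of `G`. -/
def SinglePeakedOn (G : SimpleGraph I) (r : I → I → Prop) : Prop :=
  ∀ m : ℕ, 1 ≤ m → m ≤ Nat.card I → (G.induce (topSet r m)).Connected

/-- `(T, bag)` is a tree decomposition of `G`. -/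
structure IsTreeDecomp {V : Type*} (G : SimpleGraph I) (T : SimpleGraph V)
    (bag : V → Set I) : Prop where
  tree : T.IsTree
  covers : ∀ i : I, ∃ t, i ∈ bag t
  subtree : ∀ i : I, (T.induce {t | i ∈ bag t}).Connected
  edges : ∀ ⦃i i' : I⦄, G.Adj i i' → ∃ t, i ∈ bag t ∧ i' ∈ bag t

/-- `G` has treewidth at most `k`: it admits a tree decomposition of width at most `k`. -/
def TreewidthAtMost (G : SimpleGraph I) (k : ℕ) : Prop :=
  ∃ (V : Type) (T : SimpleGraph V) (bag : V → Set I),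
    Finite V ∧ IsTreeDecomp G T bag ∧ ∀ t, (bag t).ncard ≤ k + 1

/-- `G` is `k`-degenerate: there is a linear ordering of the vertices (an injection
into `ℕ`) such that every vertex has at most `k` neighbors occurring strictly later. -/
def Degenerate (G : SimpleGraph I) (k : ℕ) : Prop :=
  ∃ ord : I → ℕ, Function.Injective ord ∧
    ∀ i, {i' | G.Adj i i' ∧ ord i < ord i'}.ncard ≤ k

/-- The first index `j` in the list `L` of bags such that `i ∈ bag (L.get j)`. -/
noncomputable def firstBagIdx {V : Type*} (L : List V) (bag : V → Set I) (i : I) : ℕ :=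
  sInf {j | ∃ h : j < L.length, i ∈ bag (L.get ⟨j, h⟩)}

/-- A strict linear order on `I` is single-peaked on a tree decomposition `(T, bag)` if
there is a sequence of nodes covering all vertices, each node after the first adjacent in
`T` to an earlier one, such that vertices first covered earlier are preferred. -/
def SinglePeakedOnTD {V : Type*} (T : SimpleGraph V) (bag : V → Set I)
    (r : I → I → Prop) : Prop :=
  ∃ L : List V,
    (∀ i : I, ∃ j : ℕ, ∃ h : j < L.length, i ∈ bag (L.get ⟨j, h⟩)) ∧
    (∀ j : ℕ, ∀ h : j < L.length, 1 ≤ j →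
      ∃ j' : ℕ, ∃ h' : j' < L.length, j' < j ∧ T.Adj (L.get ⟨j', h'⟩) (L.get ⟨j, h⟩)) ∧
    (∀ i i' : I, firstBagIdx L bag i < firstBagIdx L bag i' → r i i')

/-- `(i, s)` is a blocking pair for the feasible matching `μ`. -/
def BlockingPair (pI : StudentPrefs I S) (pS : SchoolPrefs I S) (q : S → ℕ)
    (μ : I → Option S) (i : I) (s : S) : Prop :=
  μ i ≠ some s ∧ pI i (some s) (μ i) ∧
  (({i' | μ i' = some s}.ncard < q s ∧ pS s (some i) none) ∨
   ({i' | μ i' = some s}.ncard = q s ∧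
     ∃ i₀, μ i₀ = some s ∧
       (∀ i₁, μ i₁ = some s → i₁ = i₀ ∨ pS s (some i₁) (some i₀)) ∧
       pS s (some i) (some i₀)))

/-- A matching is locally stable if for every blocking pair `(i, s)`, no neighbor of `i`
is matched to `s`. -/
def LocallyStable (G : SimpleGraph I) (pI : StudentPrefs I S) (pS : SchoolPrefs I S)
    (q : S → ℕ) (μ : I → Option S) : Prop :=
  ∀ i s, BlockingPair pI pS q μ i s → ∀ i', G.Adj i i' → μ i' ≠ some s

/-- Strategyproofness of a mechanism `f` (the schools' side being fixed). -/
def Strategyproof (f : StudentPrefs I S → (I → Option S)) : Prop :=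
  ∀ pI : StudentPrefs I S, ValidStudentPrefs pI → ∀ i : I,
    ∀ pI' : StudentPrefs I S, ValidStudentPrefs pI' →
      (∀ i'' : I, i'' ≠ i → pI' i'' = pI i'') →
      f pI i = f pI' i ∨ pI i (f pI i) (f pI' i)

end Defs

/-! Take two non-adjacent students `a ≠ b` and a single school with one seat that every
student prefers to being unmatched, and let the school rank `a` first and `b` second.
Giving the seat to `a` alone is locally envy-free, and so is giving it to `b` alone, since only
`a` could justifiably envy `b` and `a` is not a neighbour of `b`. But a matching weakly
Pareto-above both must seat `a` and `b` at the school, exceeding its quota. -/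

section Promote

variable {α : Type*}

def promote (a : α) (r : α → α → Prop) (x y : α) : Prop :=
  x = a ∧ y ≠ a ∨ x ≠ a ∧ y ≠ a ∧ r x y

theorem not_promote_self_right {a x : α} {r : α → α → Prop} : ¬ promote a r x a := by
  simp [promote]

theorem eq_of_promote_promote_right {a b x : α} {r : α → α → Prop}
    (h : promote a (promote b r) x b) : x = a := by
  unfold promote at h
  grind

instance isStrictTotalOrder_promote (a : α) (r : α → α → Prop) [IsStrictTotalOrder α r] :
    IsStrictTotalOrder α (promote a r) where
  trichotomous x y := by
    unfold promote
    grind [trichotomous_of r x y]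
  irrefl x := by
    unfold promote
    grind [irrefl_of r x]
  trans x y z := by
    unfold promote
    grind [trans_of r]

end Promote

section Market

variable {I S : Type*}

def singleMatching [DecidableEq I] (i : I) (s : S) : I → Option S :=
  Function.update (fun _ => none) i (some s)

@[simp]
theorem singleMatching_self [DecidableEq I] (i : I) (s : S) : singleMatching i s i = some s :=
  Function.update_self ..

theorem singleMatching_eq_some_iff [DecidableEq I] {i j : I} {s t : S} :
    singleMatching i s j = some t ↔ j = i ∧ s = t := by
  by_cases h : j = i <;> simp [singleMatching, h]

theorem feasible_singleMatching [DecidableEq I] {q : S → ℕ} {i : I} {s : S} (hq : 1 ≤ q s) :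
    Feasible q (singleMatching i s) := by
  intro t
  by_cases hst : s = t
  · subst hst
    simpa [singleMatching_eq_some_iff] using hq
  · simp [singleMatching_eq_some_iff, hst]

theorem lef_singleMatching [DecidableEq I] {G : SimpleGraph I} {pI : StudentPrefs I S}
    {pS : SchoolPrefs I S} {i : I} {s : S}
    (h : ∀ j, G.Adj j i → ¬ pS s (some j) (some i)) : LEF G pI pS (singleMatching i s) := by
  rintro j i' ⟨⟨t, hi', -, hpref⟩, hadj⟩
  obtain ⟨rfl, rfl⟩ := singleMatching_eq_some_iff.mp hi'
  exact h j hadj hpref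

theorem apply_eq_of_dominates_or_eq {pI : StudentPrefs I S} {Y μ : I → Option S} {i : I}
    {x : Option S} (hY : Dominates pI Y μ ∨ Y = μ) (hμ : μ i = x) (htop : ∀ y, ¬ pI i y x) :
    Y i = x := by
  subst hμ
  rcases hY with ⟨hle, -⟩ | rfl
  · exact (hle i).resolve_right (htop _)
  · rfl

theorem eq_of_feasible_of_quota_le_one [Finite I] {q : S → ℕ} {μ : I → Option S} {s : S}
    {i j : I} (hμ : Feasible q μ) (hq : q s ≤ 1) (hi : μ i = some s) (hj : μ j = some s) :
    i = j :=
  (Set.ncard_le_one_iff).mp ((hμ s).trans hq) hi hj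

end Market

theorem lef_matchings_no_lattice_general {I : Type*} [Fintype I]
    (G : SimpleGraph I) (hG : G ≠ ⊤) :
    ∃ (S : Type) (_ : Finite S) (pI : StudentPrefs I S) (pS : SchoolPrefs I S) (q : S → ℕ),
      ValidStudentPrefs pI ∧ ValidSchoolPrefs pS ∧
      ∃ Y1 Y2 : I → Option S,
        Feasible q Y1 ∧ LEF G pI pS Y1 ∧ Feasible q Y2 ∧ LEF G pI pS Y2 ∧
        ¬ ∃ Y : I → Option S, Feasible q Y ∧ LEF G pI pS Y ∧
            (Dominates pI Y Y1 ∨ Y = Y1) ∧ (Dominates pI Y Y2 ∨ Y = Y2) := by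
  classical
  obtain ⟨a, b, hab, hnadj⟩ : ∃ a b : I, a ≠ b ∧ ¬ G.Adj a b := by
    contrapose! hG
    exact SimpleGraph.eq_top_iff_forall_ne_adj.mpr hG
  let pI : StudentPrefs I Unit := fun _ => promote (some ()) WellOrderingRel
  let pS : SchoolPrefs I Unit := fun _ => promote (some a) (promote (some b) WellOrderingRel)
  refine ⟨Unit, inferInstance, pI, pS, fun _ => 1, fun _ => inferInstance,
    fun _ => inferInstance, singleMatching a (), singleMatching b (),
    feasible_singleMatching le_rfl, lef_singleMatching fun j _ => not_promote_self_right,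
    feasible_singleMatching le_rfl, lef_singleMatching fun j hj hpref => ?_, ?_⟩
  · exact hnadj (Option.some_injective _ (eq_of_promote_promote_right hpref) ▸ hj)
  · rintro ⟨Y, hY, -, hY1, hY2⟩
    have hYa := apply_eq_of_dominates_or_eq hY1 (singleMatching_self a ()) fun _ =>
      not_promote_self_right
    have hYb := apply_eq_of_dominates_or_eq hY2 (singleMatching_self b ()) fun _ =>
      not_promote_self_right
    exact hab (eq_of_feasible_of_quota_le_one hY le_rfl hYa hYb)

/-- for any finite non-complete graph on at least two students there is a
matching market whose set of feasible LEF matchings (ordered by Pareto dominance-or-equality)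
is not a lattice: two feasible LEF matchings admit no common upper bound. -/
theorem lef_matchings_no_lattice {I : Type*} [Fintype I] (hI : 2 ≤ Fintype.card I)
    (G : SimpleGraph I) (hG : G ≠ ⊤) :
    ∃ (S : Type) (_ : Finite S) (pI : StudentPrefs I S) (pS : SchoolPrefs I S) (q : S → ℕ),
      ValidStudentPrefs pI ∧ ValidSchoolPrefs pS ∧
      ∃ Y1 Y2 : I → Option S,
        Feasible q Y1 ∧ LEF G pI pS Y1 ∧ Feasible q Y2 ∧ LEF G pI pS Y2 ∧
        ¬ ∃ Y : I → Option S, Feasible q Y ∧ LEF G pI pS Y ∧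
            (Dominates pI Y Y1 ∨ Y = Y1) ∧ (Dominates pI Y Y2 ∨ Y = Y2) :=
  lef_matchings_no_lattice_general G hG
end

section
/- There exists a matching market with three students I = {i1, i2, i3}, three schools each with quota one, and student acquaintance graph equal to the path with edges {i1,i2} and {i2,i3}, in which no feasible matching is both Pareto efficient and locally envy-free. -/
/-!
Take students `0 - 1 - 2` on a path and unit quotas. Students `0` and `2` rank
`s₀ ≻ s₁ ≻ s₂`, student `1` ranks `s₁ ≻ s₀ ≻ s₂`; school `s₀` ranks student `1` first and
school `s₁` ranks student `1` last. Pareto efficiency fills `s₀` and `s₁` (each is somebody's top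
choice) and rules out student `1` holding `s₀` while a neighbour holds `s₁` (they would swap).
If student `1` holds `s₁`, then student `2` must hold `s₀` (otherwise she envies `1`), and then
student `0` envies `1` at `s₁`. Otherwise student `1` envies whichever neighbour holds `s₀`, unless
she holds `s₀` herself, which is the swap case.
-/

section General

variable {I S : Type*} {pI : StudentPrefs I S} {q : S → ℕ} {μ : I → Option S}

theorem Feasible.comp_perm (h : Feasible q μ) (σ : Equiv.Perm I) : Feasible q (μ ∘ σ) := by
  intro s
  have hpre : {k | (μ ∘ σ) k = some s} = σ ⁻¹' {k | μ k = some s} := rfl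
  rw [hpre, Set.ncard_preimage_of_injective_subset_range σ.injective (by simp)]
  exact h s

theorem Feasible.update_of_vacant [Finite I] [DecidableEq I] (h : Feasible q μ) {s : S}
    (hvac : ∀ k, μ k ≠ some s) (hq : 1 ≤ q s) (i : I) :
    Feasible q (Function.update μ i (some s)) := by
  intro t
  by_cases hts : t = s
  · subst hts
    have hsingle : {k | Function.update μ i (some t) k = some t} = {i} := by
      ext k
      by_cases hk : k = i <;> simp [hk, hvac k]
    simpa [hsingle] using hq
  · refine le_trans (Set.ncard_le_ncard fun k hk => ?_) (h t)
    by_cases hki : k = i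
    · subst hki
      simp [Ne.symm hts] at hk
    · simpa [Function.update_of_ne hki] using hk

theorem Feasible.ne_some_of_eq_some [Finite I] (h : Feasible q μ) {s : S} (hq : q s ≤ 1)
    {i j : I} (hij : i ≠ j) (hj : μ j = some s) : μ i ≠ some s := fun hi =>
  hij ((Set.ncard_le_one).mp ((h s).trans hq) i hi j hj)

theorem dominates_comp_swap [DecidableEq I] {i j : I} (hi : pI i (μ j) (μ i))
    (hj : pI j (μ i) (μ j)) : Dominates pI (μ ∘ Equiv.swap i j) μ := by
  refine ⟨fun k => ?_, i, by simpa using hi⟩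
  rcases eq_or_ne k i with rfl | hki
  · exact Or.inr (by simpa using hi)
  rcases eq_or_ne k j with rfl | hkj
  · exact Or.inr (by simpa using hj)
  · exact Or.inl (by simp [Equiv.swap_apply_of_ne_of_ne hki hkj])

theorem dominates_update_of_isTop [DecidableEq I] {i : I} {s : S}
    (htop : ∀ x, x ≠ some s → pI i (some s) x) (hne : μ i ≠ some s) :
    Dominates pI (Function.update μ i (some s)) μ := by
  refine ⟨fun k => ?_, i, by simpa using htop _ hne⟩
  rcases eq_or_ne k i with rfl | hki
  · exact Or.inr (by simpa using htop _ hne)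
  · exact Or.inl (Function.update_of_ne hki _ _)

theorem ParetoEfficient.not_prefers_swap (hPE : ParetoEfficient pI q μ) (hF : Feasible q μ)
    {i j : I} (hi : pI i (μ j) (μ i)) : ¬ pI j (μ i) (μ j) := by
  classical
  exact fun hj => hPE _ (hF.comp_perm _) (dominates_comp_swap hi hj)

theorem ParetoEfficient.exists_eq_some_of_isTop [Finite I] (hPE : ParetoEfficient pI q μ)
    (hF : Feasible q μ) {i : I} {s : S} (htop : ∀ x, x ≠ some s → pI i (some s) x)
    (hq : 1 ≤ q s) : ∃ k, μ k = some s := by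
  classical
  by_contra! hvac
  exact hPE _ (hF.update_of_vacant hvac hq i) (dominates_update_of_isTop htop (hvac i))

theorem LEF.not_prefers {G : SimpleGraph I} {pS : SchoolPrefs I S} (h : LEF G pI pS μ)
    {i j : I} {s : S} (hadj : G.Adj i j) (hj : μ j = some s) (hs : pS s (some i) (some j)) :
    ¬ pI i (some s) (μ i) := fun hi => h i j ⟨⟨s, hj, hi, hs⟩, hadj⟩

end General

namespace PathMarket

open SimpleGraph

/- Smaller rank is better and `none` is ranked last. Row `i` of the student matrix lists student
`i`'s ranks of the schools `0, 1, 2`; row `s` of the school matrix lists school `s`'s ranks of the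
students `0, 1, 2`. -/
def studentRank : Fin 3 → Option (Fin 3) → ℕ
  | _, none => 3
  | i, some s => !![0, 1, 2; 1, 0, 2; 0, 1, 2] i s

def schoolRank : Fin 3 → Option (Fin 3) → ℕ
  | _, none => 3
  | s, some i => !![1, 0, 2; 0, 2, 1; 0, 1, 2] s i

abbrev studentPrefs : StudentPrefs (Fin 3) (Fin 3) := fun i a b => studentRank i a < studentRank i b

abbrev schoolPrefs : SchoolPrefs (Fin 3) (Fin 3) := fun s a b => schoolRank s a < schoolRank s b

theorem validStudentPrefs : ValidStudentPrefs studentPrefs := fun i =>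
  Function.Injective.isStrictTotalOrder_onFun (· < ·) (by revert i; decide)

theorem validSchoolPrefs : ValidSchoolPrefs schoolPrefs := fun s =>
  Function.Injective.isStrictTotalOrder_onFun (· < ·) (by revert s; decide)

theorem pathGraph_three_adj_one {k : Fin 3} (hk : k ≠ 1) : (pathGraph 3).Adj 1 k := by
  rw [pathGraph_adj]; revert k; decide

section

variable {μ : Fin 3 → Option (Fin 3)} (hF : Feasible (fun _ => 1) μ)
  (hPE : ParetoEfficient studentPrefs (fun _ => 1) μ)
  (hL : LEF (pathGraph 3) studentPrefs schoolPrefs μ)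
include hF hL

theorem middle_ne_some_one : μ 1 ≠ some 1 := by
  intro h1
  have h2 : μ 2 = some 0 := by
    by_contra h2s0
    have h2s1 := hF.ne_some_of_eq_some le_rfl (by decide : (2 : Fin 3) ≠ 1) h1
    refine hL.not_prefers (i := 2) (pathGraph_three_adj_one (by decide)).symm h1 (by decide) ?_
    revert h2s0 h2s1; generalize μ 2 = x; revert x; decide
  have h0s0 := hF.ne_some_of_eq_some le_rfl (by decide : (0 : Fin 3) ≠ 2) h2
  have h0s1 := hF.ne_some_of_eq_some le_rfl (by decide : (0 : Fin 3) ≠ 1) h1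
  refine hL.not_prefers (i := 0) (pathGraph_three_adj_one (by decide)).symm h1 (by decide) ?_
  revert h0s0 h0s1; generalize μ 0 = x; revert x; decide

include hPE

theorem middle_eq_some_zero : μ 1 = some 0 := by
  by_contra h1s0
  obtain ⟨k, hk⟩ := hPE.exists_eq_some_of_isTop hF (i := 0) (s := 0) (by decide) le_rfl
  have hk1 : k ≠ 1 := by rintro rfl; exact h1s0 hk
  refine hL.not_prefers (pathGraph_three_adj_one hk1) hk (by clear hk; revert k; decide) ?_
  have h1s1 := middle_ne_some_one hF hL
  revert h1s0 h1s1; generalize μ 1 = x; revert x; decide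

theorem false_of_paretoEfficient_of_lef : False := by
  have h1 := middle_eq_some_zero hF hPE hL
  obtain ⟨k, hk⟩ := hPE.exists_eq_some_of_isTop hF (i := 1) (s := 1) (by decide) le_rfl
  have hk1 : k ≠ 1 := by rintro rfl; simp [h1] at hk
  refine hPE.not_prefers_swap hF (i := 1) (j := k) (by rw [h1, hk]; decide) ?_
  rw [h1, hk]; clear hk; revert k; decide

end

end PathMarket

/-- there is a matching market on three students and three schools with unit
quotas whose acquaintance graph is the path i1 - i2 - i3, in which no feasible matching is
both Pareto efficient and locally envy-free. -/
theorem no_pe_lef_on_path :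
    ∃ (pI : StudentPrefs (Fin 3) (Fin 3)) (pS : SchoolPrefs (Fin 3) (Fin 3)) (q : Fin 3 → ℕ),
      ValidStudentPrefs pI ∧ ValidSchoolPrefs pS ∧ (∀ s, q s = 1) ∧
      ¬ ∃ μ : Fin 3 → Option (Fin 3), Feasible q μ ∧ ParetoEfficient pI q μ ∧
          LEF (SimpleGraph.pathGraph 3) pI pS μ :=
  ⟨PathMarket.studentPrefs, PathMarket.schoolPrefs, fun _ => 1, PathMarket.validStudentPrefs,
    PathMarket.validSchoolPrefs, fun _ => rfl, fun ⟨_, hF, hPE, hL⟩ =>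
      PathMarket.false_of_paretoEfficient_of_lef hF hPE hL⟩
end

section
/- There exist a set of three students I = {i1, i2, i3} with student acquaintance graph equal to the path with edges {i1,i2} and {i2,i3}, three schools each with quota one, and school preferences whose restrictions to I are single-peaked on this path, such that no mechanism (a function assigning a feasible matching to every profile of students' strict linear orders on S ∪ {∅}) is simultaneously strategyproof, and such that its output matching is Pareto efficient and locally envy-free for every profile of students' preferences. -/
/-!
Number students and schools `0, 1, 2`, the students forming the path `0 – 1 – 2`. Schools `0`,
`1`, `2` rank the students `0 ≻ 1 ≻ 2`, `2 ≻ 1 ≻ 0` and `1 ≻ 0 ≻ 2`; each of these orders is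
single-peaked on the path. Let `A` be the student preference `0 ≻ 1 ≻ 2 ≻ ∅` and `B` the preference
`1 ≻ 0 ≻ 2 ≻ ∅`. A finite check shows that the Pareto efficient, locally envy-free matchings are
exactly `(0, 2, 1)` for the profile `AAA`, exactly `(2, 1, 0)` for `BBA`, and exactly these two
for `ABA`. Whatever a mechanism chooses at `ABA`, some student gains by misreporting: if it
chooses `(0, 2, 1)`, student `0` of `BBA` reports `A` and gets school `0` instead of `2`; if it
chooses `(2, 1, 0)`, student `1` of `AAA` reports `B` and gets school `1` instead of `2`.
-/

open Finset SimpleGraph Function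

section General

variable {I S : Type*}

/-- `prefOfList l a b`: `a` occurs in `l` before `b`; lists run from most to least preferred. -/
def prefOfList {α : Type*} [DecidableEq α] (l : List α) : α → α → Prop :=
  (· < ·) on l.idxOf

instance {α : Type*} [DecidableEq α] (l : List α) : DecidableRel (prefOfList l) :=
  fun a b => inferInstanceAs (Decidable (l.idxOf a < l.idxOf b))

theorem isStrictTotalOrder_prefOfList {α : Type*} [DecidableEq α] {l : List α}
    (hl : ∀ a, a ∈ l) : IsStrictTotalOrder α (prefOfList l) :=
  have hinj : Injective l.idxOf := fun a _ h => (List.idxOf_inj (hl a)).mp h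
  hinj.isStrictTotalOrder_onFun (· < ·)

theorem validStudentPrefs_prefOfList [DecidableEq S] {L : I → List (Option S)}
    (hL : ∀ i a, a ∈ L i) : ValidStudentPrefs (fun i => prefOfList (L i)) :=
  fun i => isStrictTotalOrder_prefOfList (hL i)

theorem validSchoolPrefs_prefOfList [DecidableEq I] {L : S → List (Option I)}
    (hL : ∀ s a, a ∈ L s) : ValidSchoolPrefs (fun s => prefOfList (L s)) :=
  fun s => isStrictTotalOrder_prefOfList (hL s)

theorem feasible_iff_card_filter [Fintype I] [DecidableEq S] (q : S → ℕ) (μ : I → Option S) :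
    Feasible q μ ↔ ∀ s, #{i | μ i = some s} ≤ q s := by
  simp only [Feasible, Set.ncard_eq_toFinset_card', Set.toFinset_ofPred]

theorem mem_topSet_iff [Fintype I] (r : I → I → Prop) [DecidableRel r] (m : ℕ) (i : I) :
    i ∈ topSet r m ↔ #{j | r j i} < m := by
  simp only [topSet, Set.mem_ofPred_eq, Set.ncard_eq_toFinset_card', Set.toFinset_ofPred]

theorem SimpleGraph.induce_connected_of_exists_forall_adj {G : SimpleGraph I} {s : Set I}
    (h : ∃ u ∈ s, ∀ v ∈ s, v ≠ u → G.Adj u v) : (G.induce s).Connected := by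
  obtain ⟨u, hu, hadj⟩ := h
  refine (connected_iff_exists_forall_reachable _).mpr ⟨⟨u, hu⟩, fun ⟨v, hv⟩ => ?_⟩
  obtain rfl | hne := eq_or_ne v u
  · rfl
  · exact Adj.reachable (induce_adj.mpr (hadj v hv hne))

theorem Strategyproof.not_prefers_misreport {f : StudentPrefs I S → I → Option S}
    (hf : Strategyproof f) {pI pI' : StudentPrefs I S} (hpI : ValidStudentPrefs pI)
    (hpI' : ValidStudentPrefs pI') {i : I} (hagree : ∀ j, j ≠ i → pI' j = pI j) :
    ¬ pI i (f pI' i) (f pI i) := by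
  have := hpI i
  rcases hf pI hpI i pI' hpI' hagree with h | h
  · rw [h]
    exact irrefl _
  · exact asymm h

end General

namespace PathCounterexample

def schoolPrefs : SchoolPrefs (Fin 3) (Fin 3) := fun s =>
  prefOfList (![[some 0, some 1, some 2, none],
    [some 2, some 1, some 0, none],
    [some 1, some 0, some 2, none]] s)

def listA : List (Option (Fin 3)) := [some 0, some 1, some 2, none]
def listB : List (Option (Fin 3)) := [some 1, some 0, some 2, none]

abbrev profileAAA : StudentPrefs (Fin 3) (Fin 3) := fun i => prefOfList (![listA, listA, listA] i)
abbrev profileABA : StudentPrefs (Fin 3) (Fin 3) := fun i => prefOfList (![listA, listB, listA] i)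
abbrev profileBBA : StudentPrefs (Fin 3) (Fin 3) := fun i => prefOfList (![listB, listB, listA] i)

theorem singlePeakedOn_schoolPrefs (s : Fin 3) :
    SinglePeakedOn (pathGraph 3) (fun i i' => schoolPrefs s (some i) (some i')) := by
  intro m hm hm3
  rw [Nat.card_fin] at hm3
  apply induce_connected_of_exists_forall_adj
  simp only [mem_topSet_iff, pathGraph_adj, schoolPrefs]
  interval_cases m <;> fin_cases s <;> decide

set_option maxRecDepth 10000 in
theorem eq_of_paretoEfficient_of_lef_profileAAA (μ : Fin 3 → Option (Fin 3))
    (hμ : Feasible (fun _ => 1) μ)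
    (h : ParetoEfficient profileAAA (fun _ => 1) μ ∧ LEF (pathGraph 3) profileAAA schoolPrefs μ) :
    μ = ![some 0, some 2, some 1] := by
  revert μ
  simp only [feasible_iff_card_filter, ParetoEfficient, Dominates, LEF, LocalEnvy, JEnvy,
    pathGraph_adj, schoolPrefs]
  decide

set_option maxRecDepth 10000 in
set_option synthInstance.maxSize 1000 in
theorem eq_of_paretoEfficient_of_lef_profileABA (μ : Fin 3 → Option (Fin 3))
    (hμ : Feasible (fun _ => 1) μ)
    (h : ParetoEfficient profileABA (fun _ => 1) μ ∧ LEF (pathGraph 3) profileABA schoolPrefs μ) :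
    μ = ![some 0, some 2, some 1] ∨ μ = ![some 2, some 1, some 0] := by
  revert μ
  simp only [feasible_iff_card_filter, ParetoEfficient, Dominates, LEF, LocalEnvy, JEnvy,
    pathGraph_adj, schoolPrefs]
  decide

set_option maxRecDepth 10000 in
theorem eq_of_paretoEfficient_of_lef_profileBBA (μ : Fin 3 → Option (Fin 3))
    (hμ : Feasible (fun _ => 1) μ)
    (h : ParetoEfficient profileBBA (fun _ => 1) μ ∧ LEF (pathGraph 3) profileBBA schoolPrefs μ) :
    μ = ![some 2, some 1, some 0] := by
  revert μ
  simp only [feasible_iff_card_filter, ParetoEfficient, Dominates, LEF, LocalEnvy, JEnvy,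
    pathGraph_adj, schoolPrefs]
  decide

end PathCounterexample

open PathCounterexample in
/-- there are school preferences that are single-peaked on the path
i1 - i2 - i3 (with three schools of unit quota) such that no mechanism is simultaneously
strategyproof and produces, for every profile of students' preferences, a feasible matching
that is Pareto efficient and locally envy-free. -/
theorem no_sp_pe_lef_mechanism_on_path :
    ∃ (pS : SchoolPrefs (Fin 3) (Fin 3)) (q : Fin 3 → ℕ),
      ValidSchoolPrefs pS ∧ (∀ s, q s = 1) ∧
      (∀ s : Fin 3,
        SinglePeakedOn (SimpleGraph.pathGraph 3) (fun i i' => pS s (some i) (some i'))) ∧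
      ∀ f : StudentPrefs (Fin 3) (Fin 3) → (Fin 3 → Option (Fin 3)),
        (∀ pI, ValidStudentPrefs pI → Feasible q (f pI)) →
        ¬ (Strategyproof f ∧
            ∀ pI, ValidStudentPrefs pI →
              ParetoEfficient pI q (f pI) ∧ LEF (SimpleGraph.pathGraph 3) pI pS (f pI)) := by
  refine ⟨schoolPrefs, fun _ => 1, validSchoolPrefs_prefOfList (by decide), fun _ => rfl,
    singlePeakedOn_schoolPrefs, fun f hfeas ⟨hsp, hgood⟩ => ?_⟩
  have vAAA : ValidStudentPrefs profileAAA := validStudentPrefs_prefOfList (by decide)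
  have vABA : ValidStudentPrefs profileABA := validStudentPrefs_prefOfList (by decide)
  have vBBA : ValidStudentPrefs profileBBA := validStudentPrefs_prefOfList (by decide)
  have hAAA := eq_of_paretoEfficient_of_lef_profileAAA _ (hfeas _ vAAA) (hgood _ vAAA)
  have hBBA := eq_of_paretoEfficient_of_lef_profileBBA _ (hfeas _ vBBA) (hgood _ vBBA)
  rcases eq_of_paretoEfficient_of_lef_profileABA _ (hfeas _ vABA) (hgood _ vABA) with hABA | hABA
  · apply hsp.not_prefers_misreport vBBA vABA (i := 0) fun j hj => by
      fin_cases j <;> first | exact absurd rfl hj | rfl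
    rw [hBBA, hABA]
    decide
  · apply hsp.not_prefers_misreport vAAA vABA (i := 1) fun j hj => by
      fin_cases j <;> first | exact absurd rfl hj | rfl
    rw [hAAA, hABA]
    decide
end

section
/- There exists a matching market with three students whose student acquaintance graph is the complete graph on the three students (the cycle of length three), three schools each with quota one, in which no feasible matching is both Pareto efficient and locally envy-free; since the graph is complete, equivalently no feasible matching is both Pareto efficient and fair. -/
/-!
Students `1` and `2` both rank school `0` first, and school `0` prefers student `2` to
student `1`; student `0` ranks school `1` first, and school `1` prefers student `1` to
student `0`. Chasing these priorities shows that in a fair matching every student is at best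
at the school with her own index (the student-proposing deferred acceptance outcome). That
matching is Pareto dominated by letting students `0` and `1` swap their schools, and hence so
is every fair matching.
-/

section Dominance

variable {I S : Type*} {pI : StudentPrefs I S}

def WeaklyDominates (pI : StudentPrefs I S) (ν μ : I → Option S) : Prop :=
  ∀ i, ν i = μ i ∨ pI i (ν i) (μ i)

theorem Dominates.trans_weaklyDominates (htrans : ∀ i, IsTrans (Option S) (pI i))
    {μ'' ν μ : I → Option S} (h₁ : Dominates pI μ'' ν) (h₂ : WeaklyDominates pI ν μ) :
    Dominates pI μ'' μ := by
  obtain ⟨hweak, i, hi⟩ := h₁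
  have step : ∀ j, pI j (μ'' j) (ν j) → pI j (μ'' j) (μ j) := fun j hj => by
    rcases h₂ j with h | h
    · rwa [← h]
    · exact (htrans j).trans _ _ _ hj h
  refine ⟨fun j => ?_, i, step i hi⟩
  rcases hweak j with h | h
  · rw [h]; exact h₂ j
  · exact Or.inr (step j h)

end Dominance

section Matchings

variable {I S : Type*} {pI : StudentPrefs I S} {pS : SchoolPrefs I S} {μ : I → Option S}

theorem LEF.fair_of_top (hirr : ∀ i, Std.Irrefl (pI i)) (h : LEF ⊤ pI pS μ) :
    Fair pI pS μ := by
  intro i i' hi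
  by_cases hii' : i = i'
  · subst hii'
    obtain ⟨s, hs, hpref, -⟩ := hi
    rw [hs] at hpref
    exact (hirr i).irrefl _ hpref
  · exact h i i' ⟨hi, (SimpleGraph.top_adj i i').2 hii'⟩

variable [Finite I] {q : S → ℕ}

theorem Feasible.eq_of_eq_some (hμ : Feasible q μ) {s : S} (hq : q s ≤ 1) {i j : I}
    (hi : μ i = some s) (hj : μ j = some s) : i = j :=
  (Set.ncard_le_one_iff (Set.toFinite _)).1 ((hμ s).trans hq) hi hj

theorem feasible_of_injective (hq : ∀ s, 1 ≤ q s) (hμ : μ.Injective) : Feasible q μ :=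
  fun s => ((Set.ncard_le_one_iff (Set.toFinite _)).2 fun ha hb => hμ (ha.trans hb.symm)).trans
    (hq s)

end Matchings

namespace TriangleMarket

open Function

def studentRank : Fin 3 → Option (Fin 3) → ℕ
  | 0, some 1 => 0 | 0, some 0 => 1 | 0, some 2 => 2 | 0, none => 3
  | _, some 0 => 0 | _, some 1 => 1 | _, some 2 => 2 | _, none => 3

def schoolRank : Fin 3 → Option (Fin 3) → ℕ
  | 0, some 0 => 0 | 0, some 2 => 1 | 0, some 1 => 2 | 0, none => 3
  | _, some 1 => 0 | _, some 0 => 1 | _, some 2 => 2 | _, none => 3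

def studentPrefs : StudentPrefs (Fin 3) (Fin 3) := fun i => (· < ·) on studentRank i

def schoolPrefs : SchoolPrefs (Fin 3) (Fin 3) := fun s => (· < ·) on schoolRank s

theorem studentRank_injective (i : Fin 3) : Injective (studentRank i) := by
  revert i; decide

theorem schoolRank_injective (s : Fin 3) : Injective (schoolRank s) := by
  revert s; decide

theorem validStudentPrefs : ValidStudentPrefs studentPrefs := fun i =>
  (studentRank_injective i).isStrictTotalOrder_onFun _

theorem validSchoolPrefs : ValidSchoolPrefs schoolPrefs := fun s =>
  (schoolRank_injective s).isStrictTotalOrder_onFun _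

def deferredAcceptance : Fin 3 → Option (Fin 3) := fun i => some i

def swapped : Fin 3 → Option (Fin 3) := ![some 1, some 0, some 2]

theorem swapped_dominates : Dominates studentPrefs swapped deferredAcceptance := by
  unfold Dominates studentPrefs; decide

section FairMatching

variable {μ : Fin 3 → Option (Fin 3)}

theorem rank_le_of_fair (hfair : Fair studentPrefs schoolPrefs μ) {i j s : Fin 3}
    (hj : μ j = some s) (hs : schoolRank s (some i) < schoolRank s (some j)) :
    studentRank i (μ i) ≤ studentRank i (some s) :=
  not_lt.1 fun hi => hfair i j ⟨s, hj, hi, hs⟩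

theorem apply_one_ne_some_zero (hμ : Feasible (fun _ => 1) μ)
    (hfair : Fair studentPrefs schoolPrefs μ) : μ 1 ≠ some 0 := by
  intro h10
  have hle := rank_le_of_fair hfair (i := 2) h10 (by decide)
  have hne : μ 2 ≠ some 0 := fun h20 => absurd (hμ.eq_of_eq_some le_rfl h10 h20) (by decide)
  generalize μ 2 = x at hle hne
  revert x; decide

theorem apply_zero_ne_some_one (hμ : Feasible (fun _ => 1) μ)
    (hfair : Fair studentPrefs schoolPrefs μ) : μ 0 ≠ some 1 := by
  intro h01
  have hle := rank_le_of_fair hfair (i := 1) h01 (by decide)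
  have hne : μ 1 ≠ some 1 := fun h11 => absurd (hμ.eq_of_eq_some le_rfl h01 h11) (by decide)
  have h10 := apply_one_ne_some_zero hμ hfair
  generalize μ 1 = x at hle hne h10
  revert x; decide

theorem apply_two_ne_some_zero (hμ : Feasible (fun _ => 1) μ)
    (hfair : Fair studentPrefs schoolPrefs μ) : μ 2 ≠ some 0 := by
  intro h20
  have hle := rank_le_of_fair hfair (i := 0) h20 (by decide)
  have hne : μ 0 ≠ some 0 := fun h00 => absurd (hμ.eq_of_eq_some le_rfl h00 h20) (by decide)
  have h01 := apply_zero_ne_some_one hμ hfair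
  generalize μ 0 = x at hle hne h01
  revert x; decide

theorem apply_two_ne_some_one (hμ : Feasible (fun _ => 1) μ)
    (hfair : Fair studentPrefs schoolPrefs μ) : μ 2 ≠ some 1 := by
  intro h21
  have hle := rank_le_of_fair hfair (i := 1) h21 (by decide)
  have hne : μ 1 ≠ some 1 := fun h11 => absurd (hμ.eq_of_eq_some le_rfl h11 h21) (by decide)
  have h10 := apply_one_ne_some_zero hμ hfair
  generalize μ 1 = x at hle hne h10
  revert x; decide

theorem weaklyDominates_of_fair (hμ : Feasible (fun _ => 1) μ)
    (hfair : Fair studentPrefs schoolPrefs μ) :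
    WeaklyDominates studentPrefs deferredAcceptance μ := by
  have h0 := apply_zero_ne_some_one hμ hfair
  have h1 := apply_one_ne_some_zero hμ hfair
  have h2 := And.intro (apply_two_ne_some_zero hμ hfair) (apply_two_ne_some_one hμ hfair)
  intro i
  fin_cases i <;> dsimp only [studentPrefs, Fin.reduceFinMk]
  · generalize μ 0 = x at h0; revert x; decide
  · generalize μ 1 = x at h1; revert x; decide
  · generalize μ 2 = x at h2; revert x; decide

end FairMatching

theorem not_exists_feasible_paretoEfficient_fair :
    ¬ ∃ μ, Feasible (fun _ => 1) μ ∧ ParetoEfficient studentPrefs (fun _ => 1) μ ∧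
      Fair studentPrefs schoolPrefs μ := by
  rintro ⟨μ, hμ, hpe, hfair⟩
  have hswap : Feasible (fun _ => 1) swapped :=
    feasible_of_injective (fun _ => le_rfl) (by unfold swapped; decide)
  exact hpe swapped hswap <| swapped_dominates.trans_weaklyDominates
    (fun i => (validStudentPrefs i).toIsTrans) (weaklyDominates_of_fair hμ hfair)

end TriangleMarket

/-- there is a matching market on three students whose acquaintance graph is
the complete graph (the 3-cycle) and three schools of unit quota in which no feasible
matching is both Pareto efficient and locally envy-free; since the graph is complete,
equivalently no feasible matching is both Pareto efficient and fair. -/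
theorem no_pe_lef_on_triangle :
    ∃ (pI : StudentPrefs (Fin 3) (Fin 3)) (pS : SchoolPrefs (Fin 3) (Fin 3)) (q : Fin 3 → ℕ),
      ValidStudentPrefs pI ∧ ValidSchoolPrefs pS ∧ (∀ s, q s = 1) ∧
      (¬ ∃ μ : Fin 3 → Option (Fin 3), Feasible q μ ∧ ParetoEfficient pI q μ ∧
          LEF (⊤ : SimpleGraph (Fin 3)) pI pS μ) ∧
      (¬ ∃ μ : Fin 3 → Option (Fin 3), Feasible q μ ∧ ParetoEfficient pI q μ ∧
          Fair pI pS μ) := by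
  open TriangleMarket in
  refine ⟨studentPrefs, schoolPrefs, fun _ => 1, validStudentPrefs, validSchoolPrefs,
    fun _ => rfl, ?_, not_exists_feasible_paretoEfficient_fair⟩
  rintro ⟨μ, hμ, hpe, hlef⟩
  exact not_exists_feasible_paretoEfficient_fair
    ⟨μ, hμ, hpe, hlef.fair_of_top fun i => (validStudentPrefs i).toIrrefl⟩
end

section
/- Let G be a finite tree on a set I and let ≻ be a strict linear order on I that is single-peaked on G. Then every i ∈ I is ranked within the top two of the set {i} ∪ N(i) under ≻; that is, at most one neighbor of i in G is preferred to i under ≻. -/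
/-! The elements preferred to `i` are a top set of the order, so they span a subtree of `G` that
misses `i`. Two neighbours of `i` in that subtree would be joined by a path avoiding `i`, which
together with the edges to `i` closes a cycle. -/

open SimpleGraph

section

variable {I : Type*}

lemma setOf_rel_ssubset {r : I → I → Prop} [IsStrictOrder I r] {x i : I} (hxi : r x i) :
    {j | r j x} ⊂ {j | r j i} :=
  ⟨fun _ hj ↦ _root_.trans hj hxi, fun h ↦ irrefl x (h hxi)⟩

lemma setOf_rel_subset_of_not_rel {r : I → I → Prop} [IsStrictTotalOrder I r] {x i : I}
    (hxi : ¬ r x i) : {j | r j i} ⊆ {j | r j x} := by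
  intro j hj
  rcases trichotomous_of r x i with h | rfl | h
  · exact absurd h hxi
  · exact hj
  · exact _root_.trans hj h

lemma topSet_ncard_setOf_rel [Finite I] (r : I → I → Prop) [IsStrictTotalOrder I r] (i : I) :
    topSet r {j | r j i}.ncard = {j | r j i} := by
  ext x
  refine ⟨fun hx ↦ ?_, fun hxi ↦ Set.ncard_lt_ncard (setOf_rel_ssubset hxi)⟩
  by_contra hxi
  exact (Set.ncard_le_ncard (setOf_rel_subset_of_not_rel hxi)).not_gt hx

lemma SimpleGraph.Reachable.exists_walk_support_subset_of_induce {G : SimpleGraph I} {A : Set I}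
    {a b : A} (h : (G.induce A).Reachable a b) :
    ∃ p : G.Walk a b, ∀ x ∈ p.support, x ∈ A := by
  obtain ⟨p⟩ := h
  refine ⟨p.map (Embedding.induce A).toHom, fun x hx ↦ ?_⟩
  obtain ⟨y, -, rfl⟩ := List.mem_map.mp (p.support_map (Embedding.induce A).toHom ▸ hx)
  exact y.2

lemma SimpleGraph.IsAcyclic.eq_of_adj_of_preconnected_induce {G : SimpleGraph I}
    (hG : G.IsAcyclic) {A : Set I} (hA : (G.induce A).Preconnected) {i a b : I} (hi : i ∉ A)
    (ha : a ∈ A) (hb : b ∈ A) (hia : G.Adj i a) (hib : G.Adj i b) : a = b := by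
  obtain ⟨p, hpA⟩ := (hA ⟨b, hb⟩ ⟨a, ha⟩).exists_walk_support_subset_of_induce
  have hbridge := isBridge_iff_forall_walk_mem_edges.mp
    (isAcyclic_iff_forall_adj_isBridge.mp hG hia) (.cons hib p)
  rw [Walk.edges_cons, List.mem_cons] at hbridge
  rcases hbridge with h | h
  · exact Sym2.congr_right.mp h
  · exact absurd (hpA i (p.fst_mem_support_of_mem_edges h)) hi

end

/-- under a strict linear order single-peaked on a tree, every vertex is ranked
within the top two of itself and its neighbors: at most one neighbor is preferred to it. -/
theorem single_peaked_tree_top_two {I : Type*} [Fintype I]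
    (G : SimpleGraph I) (hT : G.IsTree)
    (r : I → I → Prop) (hr : IsStrictTotalOrder I r)
    (hsp : SinglePeakedOn G r) :
    ∀ i : I, {i' | G.Adj i i' ∧ r i' i}.ncard ≤ 1 := by
  intro i
  have := hr
  rw [Set.ncard_le_one]
  rintro a ⟨hia, hai⟩ b ⟨hib, hbi⟩
  have hconn := hsp _ ((Set.ncard_pos (s := {j | r j i})).mpr ⟨a, hai⟩) (Set.ncard_le_card _)
  rw [topSet_ncard_setOf_rel] at hconn
  exact hT.isAcyclic.eq_of_adj_of_preconnected_induce hconn.preconnected (irrefl i) hai hbi hia hib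
end

section
/- Consider a matching market in which every school has quota at least one, the student acquaintance graph G is a tree, and for every school s the restriction of ≻_s to I is single-peaked on G. Then there exists a feasible matching that is simultaneously Pareto efficient, locally envy-free, and mutually-best. -/
/-!
Let the students pick one at a time their favourite option among those still available, starting
with the mutually-best pairs: such a serial dictatorship is Pareto efficient and mutually-best.
On a tree, single-peakedness of `≻_s` means that among the neighbours of a student `i'` at most
one, the neighbour toward the peak of `s`, is ranked above `i'` by `s`; so local envy toward a
student at `s` can only come from that neighbour. The picking order is chosen so that this
neighbour has already picked, hence prefers her pick to the then still available `s`. When no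
student can safely go next, each remaining student is blocked by a remaining neighbour, and as
the graph is a forest two of them block each other; they pick together, and since their schools
differ neither envies the other.
-/

open Function

namespace SimpleGraph

variable {V : Type*} {G : SimpleGraph V}

lemma IsAcyclic.card_edgeSet_lt [Finite V] [Nonempty V] (hG : G.IsAcyclic) :
    Nat.card G.edgeSet < Nat.card V := by
  obtain ⟨F, hGF, -, hF⟩ := connected_top.exists_isTree_le_of_le_of_isAcyclic le_top hG
  have hF_card := (isTree_iff_connected_and_card.mp hF).2
  have hGF_card : Nat.card G.edgeSet ≤ Nat.card F.edgeSet :=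
    Nat.card_mono (Set.toFinite _) (edgeSet_mono hGF)
  omega

/-- Otherwise `v ↦ s(v, f v)` would inject the vertices into the edges, of which a forest has
fewer. -/
lemma IsAcyclic.exists_apply_apply_eq [Finite V] [Nonempty V] (hG : G.IsAcyclic) (f : V → V)
    (hf : ∀ v, G.Adj v (f v)) : ∃ v, f (f v) = v := by
  by_contra! h
  have hinj : Injective fun v => (⟨s(v, f v), hf v⟩ : G.edgeSet) := by
    intro v w hvw
    rcases Sym2.eq_iff.mp (Subtype.ext_iff.mp hvw) with ⟨hvw, -⟩ | ⟨hvw, hwv⟩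
    · exact hvw
    · exact absurd (by rw [hwv, ← hvw]) (h v)
  exact (Nat.card_le_card_of_injective _ hinj).not_gt hG.card_edgeSet_lt

end SimpleGraph

open SimpleGraph

section SinglePeaked

variable {I : Type*} [Finite I] {r : I → I → Prop} [IsStrictTotalOrder I r]

lemma topSet_ncard_setOf_rel_s7 (k : I) : topSet r {x | r x k}.ncard = {x | r x k} := by
  ext j
  simp only [topSet, Set.mem_ofPred_eq]
  constructor
  · intro hj
    by_contra hjk
    have hsub : {x | r x k} ⊆ {x | r x j} := by
      rcases trichotomous_of r j k with hjk' | rfl | hkj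
      · exact absurd hjk' hjk
      · exact le_rfl
      · exact fun x hx => trans_of r hx hkj
    exact hj.not_ge (Set.ncard_le_ncard hsub)
  · intro hjk
    exact Set.ncard_lt_ncard
      ⟨fun x hx => trans_of r hx hjk, fun hsub => irrefl_of r j (hsub hjk)⟩

/-- Two such neighbours would be joined both through `k` and by a path among the vertices ranked
above `k`, which are connected. -/
lemma SinglePeakedOn.eq_of_adj_of_rel {G : SimpleGraph I} (hG : G.IsAcyclic)
    (hsp : SinglePeakedOn G r) {i j k : I} (hik : G.Adj i k) (hjk : G.Adj j k)
    (hi : r i k) (hj : r j k) : i = j := by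
  classical
  set T := {x | r x k}
  have hT_pos : 1 ≤ T.ncard := Nat.one_le_iff_ne_zero.mpr (Set.ncard_ne_zero_of_mem hi)
  have hconn := hsp T.ncard hT_pos (Set.ncard_le_card T)
  rw [topSet_ncard_setOf_rel_s7 k] at hconn
  obtain ⟨W⟩ := hconn.preconnected ⟨i, hi⟩ ⟨j, hj⟩
  set p := (W.map (Embedding.induce T).toHom).bypass
  have hkp : k ∉ p.support := fun hk => by
    have hk' := Walk.support_bypass_subset_support _ hk
    rw [Walk.support_map] at hk'
    obtain ⟨x, -, hx⟩ := List.mem_map.mp hk'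
    have hxT : (x : I) ∈ T := x.2
    rw [show (x : I) = k from hx] at hxT
    exact irrefl_of r k hxT
  have hj_mem := hG.mem_support_of_ne_mem_support_of_adj_of_isPath (Path.singleton hik).2
    (Walk.bypass_isPath _) hjk.symm hkp
  simp only [Path.singleton, Walk.support_cons, Walk.support_nil, List.mem_cons,
    List.not_mem_nil, or_false] at hj_mem
  exact hj_mem.resolve_right hjk.ne |>.symm

end SinglePeaked

section SerialDictatorship

variable {I S : Type*} {pI : StudentPrefs I S} {q : S → ℕ} {P : Finset I}
  {μ : I → Option S} {i : I}

def assigned (P : Finset I) (μ : I → Option S) (s : S) : Set I := {j | j ∈ P ∧ μ j = some s}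

def Available (q : S → ℕ) (P : Finset I) (μ : I → Option S) : Option S → Prop
  | none => True
  | some s => (assigned P μ s).ncard < q s

def IsBestAvailable (pI : StudentPrefs I S) (q : S → ℕ) (P : Finset I) (μ : I → Option S)
    (i : I) (o : Option S) : Prop :=
  Available q P μ o ∧ ∀ x, Available q P μ x → o = x ∨ pI i o x

/-- Invariant of a serial dictatorship once the students of `P` have picked. -/
structure SerialDictatorshipState (pI : StudentPrefs I S) (q : S → ℕ) (P : Finset I)
    (μ : I → Option S) : Prop where
  feasible : ∀ s, (assigned P μ s).ncard ≤ q s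
  pick_best : ∀ j ∈ P, ∀ x, Available q P μ x → μ j = x ∨ pI j (μ j) x
  efficient : ∀ ν, Feasible q ν → (∀ j ∈ P, ν j = μ j ∨ pI j (ν j) (μ j)) →
    ∀ j ∈ P, ν j = μ j

lemma exists_isBestAvailable [Finite S] (hpI : ValidStudentPrefs pI) (q : S → ℕ)
    (P : Finset I) (μ : I → Option S) (i : I) : ∃ o, IsBestAvailable pI q P μ i o := by
  have := hpI i
  obtain ⟨o, ho, hmax⟩ := (Finite.wellFounded_of_trans_of_irrefl (pI i)).has_min
    (Available q P μ) ⟨none, trivial⟩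
  refine ⟨o, ho, fun x hx => ?_⟩
  rcases trichotomous_of (pI i) o x with h | h | h
  · exact Or.inr h
  · exact Or.inl h
  · exact absurd h (hmax x hx)

lemma Feasible.available_of_eqOn [Finite I] {ν : I → Option S} (hν : Feasible q ν)
    (hνμ : ∀ j ∈ P, ν j = μ j) (hi : i ∉ P) : Available q P μ (ν i) := by
  cases hνi : ν i with
  | none => trivial
  | some s =>
    have hsub : insert i (assigned P μ s) ⊆ {j | ν j = some s} := by
      rintro j (rfl | ⟨hj, hμj⟩)
      · exact hνi
      · exact (hνμ j hj).trans hμj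
    have hcard := (Set.ncard_le_ncard hsub).trans (hν s)
    rw [Set.ncard_insert_of_notMem fun h => hi h.1] at hcard
    exact hcard

variable [DecidableEq I]

lemma assigned_insert_update_of_ne (hi : i ∉ P) {o : Option S} {s : S} (hos : o ≠ some s) :
    assigned (insert i P) (update μ i o) s = assigned P μ s := by
  ext j
  rcases eq_or_ne j i with rfl | hj
  · simp [assigned, hi, hos]
  · simp [assigned, hj]

lemma assigned_insert_update_self (s : S) :
    assigned (insert i P) (update μ i (some s)) s = insert i (assigned P μ s) := by
  ext j
  rcases eq_or_ne j i with rfl | hj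
  · simp [assigned]
  · simp [assigned, hj]

lemma assigned_subset_insert_update (hi : i ∉ P) (o : Option S) (s : S) :
    assigned P μ s ⊆ assigned (insert i P) (update μ i o) s := fun j ⟨hj, hμj⟩ =>
  ⟨Finset.mem_insert_of_mem hj, by rwa [update_of_ne (ne_of_mem_of_not_mem hj hi)]⟩

lemma Available.of_insert_update [Finite I] (hi : i ∉ P) {o x : Option S}
    (hx : Available q (insert i P) (update μ i o) x) : Available q P μ x := by
  cases x with
  | none => trivial
  | some s => exact (Set.ncard_le_ncard (assigned_subset_insert_update hi o s)).trans_lt hx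

lemma Available.insert_update (hi : i ∉ P) {o x : Option S} (hx : Available q P μ x)
    (hox : o ≠ x) : Available q (insert i P) (update μ i o) x := by
  cases x with
  | none => trivial
  | some s =>
    change (assigned _ _ s).ncard < q s
    rwa [assigned_insert_update_of_ne hi hox]

lemma IsBestAvailable.insert_update [Finite I] {j : I} {o o' : Option S}
    (h : IsBestAvailable pI q P μ j o') (hi : i ∉ P) (ho : o ≠ o') :
    IsBestAvailable pI q (insert i P) (update μ i o) j o' :=
  ⟨h.1.insert_update hi ho, fun x hx => h.2 x (hx.of_insert_update hi)⟩

lemma SerialDictatorshipState.insert_update [Finite I]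
    (h : SerialDictatorshipState pI q P μ) (hpI : ValidStudentPrefs pI) (hi : i ∉ P)
    {o : Option S} (ho : IsBestAvailable pI q P μ i o) :
    SerialDictatorshipState pI q (insert i P) (update μ i o) := by
  have hμ : ∀ j ∈ P, update μ i o j = μ j := fun j hj =>
    update_of_ne (ne_of_mem_of_not_mem hj hi) _ _
  refine ⟨fun s => ?_, fun j hj x hx => ?_, fun ν hν hweak j hj => ?_⟩
  · by_cases hos : o = some s
    · have hlt : (assigned P μ s).ncard < q s := by subst hos; exact ho.1
      rw [hos, assigned_insert_update_self, Set.ncard_insert_of_notMem fun h => hi h.1]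
      exact hlt
    · rw [assigned_insert_update_of_ne hi hos]
      exact h.feasible s
  · rcases Finset.mem_insert.mp hj with rfl | hj
    · rw [update_self]
      exact ho.2 x (hx.of_insert_update hi)
    · rw [hμ j hj]
      exact h.pick_best j hj x (hx.of_insert_update hi)
  · have hνP : ∀ j ∈ P, ν j = μ j := h.efficient ν hν fun j hj => by
      simpa only [hμ j hj] using hweak j (Finset.mem_insert_of_mem hj)
    rcases Finset.mem_insert.mp hj with rfl | hj
    · have := hpI j
      rw [update_self]
      have hνj := hweak j (Finset.mem_insert_self _ _)
      rw [update_self] at hνj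
      rcases ho.2 _ (hν.available_of_eqOn hνP hi) with hoν | hoν
      · exact hoν.symm
      · exact hνj.resolve_right (asymm_of (pI j) hoν)
    · rw [hμ j hj, hνP j hj]

end SerialDictatorship

section PartialSolution

variable {I S : Type*} {G : SimpleGraph I} {pI : StudentPrefs I S} {pS : SchoolPrefs I S}
  {q : S → ℕ} {P : Finset I} {μ : I → Option S}

lemma MBPair.eq_or_rel {i : I} {s : S} (h : MBPair pI pS i s) (x : Option S) :
    some s = x ∨ pI i (some s) x := by
  by_cases hx : x = some s
  · exact Or.inl hx.symm
  · exact Or.inr (h.1 x hx)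

lemma MBPair.school_eq (hpI : ValidStudentPrefs pI) {i : I} {s s' : S} (h : MBPair pI pS i s)
    (h' : MBPair pI pS i s') : s = s' := by
  by_contra hne
  have := hpI i
  exact asymm_of (pI i) (h.1 (some s') (by simpa using Ne.symm hne))
    (h'.1 (some s) (by simpa using hne))

lemma MBPair.student_eq (hpS : ValidSchoolPrefs pS) {i i' : I} {s : S} (h : MBPair pI pS i s)
    (h' : MBPair pI pS i' s) : i = i' := by
  by_contra hne
  have := hpS s
  exact asymm_of (pS s) (h.2 (some i') (by simpa using Ne.symm hne))
    (h'.2 (some i) (by simpa using hne))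

structure PartialSolution (G : SimpleGraph I) (pI : StudentPrefs I S) (pS : SchoolPrefs I S)
    (q : S → ℕ) (P : Finset I) (μ : I → Option S) : Prop
    extends SerialDictatorshipState pI q P μ where
  /-- Requiring `i ∈ P` ensures that the students still to pick will never envy a student
  of `P`. -/
  locallyEnvyFree : ∀ i' ∈ P, ∀ s, μ i' = some s → ∀ i, G.Adj i i' →
    pS s (some i) (some i') → i ∈ P ∧ (μ i = some s ∨ pI i (μ i) (some s))
  mutuallyBest : ∀ i s, MBPair pI pS i s → i ∈ P ∧ μ i = some s

/-- Start by matching all mutually-best pairs: no two of them compete for a seat, and nobody has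
justified envy toward a school's favourite student. -/
lemma exists_partialSolution [Fintype I] (G : SimpleGraph I) (hpI : ValidStudentPrefs pI)
    (hpS : ValidSchoolPrefs pS) (hq : ∀ s, 1 ≤ q s) :
    ∃ P μ, PartialSolution G pI pS q P μ := by
  classical
  let μ₀ : I → Option S := fun i => if h : ∃ s, MBPair pI pS i s then some h.choose else none
  have hμ₀ : ∀ i s, μ₀ i = some s ↔ MBPair pI pS i s := by
    intro i s
    by_cases h : ∃ s, MBPair pI pS i s
    · simp only [μ₀, dif_pos h, Option.some_inj]
      exact ⟨fun hs => hs ▸ h.choose_spec, h.choose_spec.school_eq hpI⟩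
    · simp only [μ₀, dif_neg h, reduceCtorEq, false_iff]
      exact fun hs => h ⟨s, hs⟩
  refine ⟨Finset.univ.filter fun i => ∃ s, MBPair pI pS i s, μ₀,
    ⟨⟨fun s => ?_, ?_, ?_⟩, ?_, ?_⟩⟩
  · refine (Set.ncard_le_one_iff_subsingleton.mpr fun j hj j' hj' => ?_).trans (hq s)
    exact ((hμ₀ j s).mp hj.2).student_eq hpS ((hμ₀ j' s).mp hj'.2)
  · intro j hj x _
    obtain ⟨s, hs⟩ := (Finset.mem_filter.mp hj).2
    rw [(hμ₀ j s).mpr hs]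
    exact hs.eq_or_rel x
  · intro ν _ hweak j hj
    obtain ⟨s, hs⟩ := (Finset.mem_filter.mp hj).2
    have := hpI j
    have hνj := hweak j hj
    rw [(hμ₀ j s).mpr hs] at hνj ⊢
    exact (hs.eq_or_rel (ν j)).elim Eq.symm fun h => hνj.resolve_right (asymm_of (pI j) h)
  · intro i' _ s hs i hadj hrel
    have := hpS s
    exact absurd hrel (asymm_of (pS s) (((hμ₀ i' s).mp hs).2 (some i) (by simpa using hadj.ne)))
  · intro i s hs
    exact ⟨Finset.mem_filter.mpr ⟨Finset.mem_univ i, s, hs⟩, (hμ₀ i s).mpr hs⟩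

lemma PartialSolution.extend {P' : Finset I} {μ' : I → Option S}
    (h : PartialSolution G pI pS q P μ) (hsd : SerialDictatorshipState pI q P' μ')
    (hPP' : P ⊆ P') (hμ : ∀ j ∈ P, μ' j = μ j)
    (hnew : ∀ i' ∈ P', i' ∉ P → ∀ s, μ' i' = some s → ∀ i, G.Adj i i' →
      pS s (some i) (some i') → i ∈ P' ∧ (μ' i = some s ∨ pI i (μ' i) (some s))) :
    PartialSolution G pI pS q P' μ' where
  toSerialDictatorshipState := hsd
  locallyEnvyFree i' hi' s hs i hadj hrel := by
    by_cases hi'P : i' ∈ P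
    · obtain ⟨hiP, hpref⟩ := h.locallyEnvyFree i' hi'P s (by rwa [← hμ i' hi'P]) i hadj hrel
      exact ⟨hPP' hiP, by rwa [hμ i hiP]⟩
    · exact hnew i' hi' hi'P s hs i hadj hrel
  mutuallyBest i s hs := by
    obtain ⟨hiP, hμi⟩ := h.mutuallyBest i s hs
    exact ⟨hPP' hiP, (hμ i hiP).trans hμi⟩

variable [DecidableEq I] [Finite I]

lemma PartialSolution.insert_update (h : PartialSolution G pI pS q P μ)
    (hpI : ValidStudentPrefs pI) {i : I} (hi : i ∉ P) {o : Option S}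
    (ho : IsBestAvailable pI q P μ i o)
    (hready : ∀ s, o = some s →
      ∀ i₀, G.Adj i₀ i → pS s (some i₀) (some i) → i₀ ∈ P) :
    PartialSolution G pI pS q (insert i P) (update μ i o) := by
  have hμ : ∀ j ∈ P, update μ i o j = μ j := fun j hj =>
    update_of_ne (ne_of_mem_of_not_mem hj hi) _ _
  refine h.extend (h.toSerialDictatorshipState.insert_update hpI hi ho)
    (Finset.subset_insert _ _) hμ fun i' hi' hi'P s hs i₀ hadj hrel => ?_
  obtain rfl : i' = i := (Finset.mem_insert.mp hi').resolve_right hi'P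
  rw [update_self] at hs
  subst hs
  have hi₀ := hready s rfl i₀ hadj hrel
  refine ⟨Finset.mem_insert_of_mem hi₀, ?_⟩
  rw [hμ i₀ hi₀]
  exact h.pick_best i₀ hi₀ _ ho.1

/-- The two schools differ, so both students get their pick and each prefers hers to the
other's. -/
lemma PartialSolution.insert_update_pair (h : PartialSolution G pI pS q P μ)
    (hpI : ValidStudentPrefs pI) (hpS : ValidSchoolPrefs pS) (hG : G.IsAcyclic)
    (hsp : ∀ s : S, SinglePeakedOn G (fun i i' => pS s (some i) (some i')))
    {a b : I} {sa sb : S} (ha : a ∉ P) (hb : b ∉ P) (hab : G.Adj a b)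
    (hoa : IsBestAvailable pI q P μ a (some sa)) (hob : IsBestAvailable pI q P μ b (some sb))
    (hba_rel : pS sa (some b) (some a)) (hab_rel : pS sb (some a) (some b)) :
    PartialSolution G pI pS q (insert b (insert a P))
      (update (update μ a (some sa)) b (some sb)) := by
  have hsab : sa ≠ sb := by
    rintro rfl
    have := hpS sa
    exact asymm_of (pS sa) hba_rel hab_rel
  have hb' : b ∉ insert a P := by simp [hab.ne.symm, hb]
  set μ₂ := update (update μ a (some sa)) b (some sb)
  have hμ₂a : μ₂ a = some sa := by simp [μ₂, update_of_ne hab.ne]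
  have hμ₂b : μ₂ b = some sb := update_self _ _ _
  have hμ₂ : ∀ j ∈ P, μ₂ j = μ j := fun j hj => by
    simp [μ₂, update_of_ne (ne_of_mem_of_not_mem hj ha),
      update_of_ne (ne_of_mem_of_not_mem hj hb)]
  have hsd := (h.toSerialDictatorshipState.insert_update hpI ha hoa).insert_update hpI hb'
    (hob.insert_update ha (by simpa using hsab))
  have hpref : ∀ {y : I} {sx sy : S}, IsBestAvailable pI q P μ y (some sy) →
      Available q P μ (some sx) → sx ≠ sy → pI y (some sy) (some sx) := fun hy hx hne =>
    (hy.2 _ hx).resolve_left (by simpa using Ne.symm hne)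
  have hpartner : ∀ {x y : I} {sx sy : S}, μ₂ y = some sy → y ∈ insert b (insert a P) →
      G.Adj y x → pS sx (some y) (some x) → pI y (some sy) (some sx) →
      ∀ i₀, G.Adj i₀ x → pS sx (some i₀) (some x) →
        i₀ ∈ insert b (insert a P) ∧ (μ₂ i₀ = some sx ∨ pI i₀ (μ₂ i₀) (some sx)) := by
    intro x y sx sy hy hyP hyx hyx_rel hy_pref i₀ hadj hrel
    have : IsStrictTotalOrder I (fun i i' => pS sx (some i) (some i')) := by
      have := hpS sx
      exact (Option.some_injective I).isStrictTotalOrder_onFun (pS sx)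
    obtain rfl : i₀ = y := (hsp sx).eq_of_adj_of_rel hG hadj hyx hrel hyx_rel
    exact ⟨hyP, Or.inr (hy ▸ hy_pref)⟩
  refine h.extend hsd (fun j hj => by simp [hj]) hμ₂ fun i' hi' hi'P s hs => ?_
  rcases Finset.mem_insert.mp hi' with rfl | hi'
  · obtain rfl : sb = s := Option.some_injective _ (hμ₂b.symm.trans hs)
    exact hpartner hμ₂a (by simp) hab hab_rel (hpref hoa hob.1 hsab.symm)
  · obtain rfl : i' = a := (Finset.mem_insert.mp hi').resolve_right hi'P
    obtain rfl : sa = s := Option.some_injective _ (hμ₂a.symm.trans hs)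
    exact hpartner hμ₂b (by simp) hab.symm hba_rel (hpref hob hoa.1 hsab)

end PartialSolution

section Termination

variable {I S : Type*} [Fintype I] [Finite S] {G : SimpleGraph I} {pI : StudentPrefs I S}
  {pS : SchoolPrefs I S} {q : S → ℕ} {P : Finset I} {μ : I → Option S}

/-- If no student outside `P` can pick safely, each is blocked by a neighbour outside `P` whom
her best available school ranks above her; in the forest `G` two of them block each other. -/
lemma PartialSolution.exists_ssuperset (h : PartialSolution G pI pS q P μ)
    (hpI : ValidStudentPrefs pI) (hpS : ValidSchoolPrefs pS) (hG : G.IsAcyclic)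
    (hsp : ∀ s : S, SinglePeakedOn G (fun i i' => pS s (some i) (some i')))
    (hP : P ≠ Finset.univ) : ∃ P' μ', P ⊂ P' ∧ PartialSolution G pI pS q P' μ' := by
  classical
  choose o ho using exists_isBestAvailable hpI q P μ
  by_cases hready : ∃ i ∉ P, ∀ s, o i = some s →
      ∀ i₀, G.Adj i₀ i → pS s (some i₀) (some i) → i₀ ∈ P
  · obtain ⟨i, hi, hready⟩ := hready
    exact ⟨_, _, Finset.ssubset_insert hi, h.insert_update hpI hi (ho i) hready⟩
  push Not at hready
  choose! σ hσ f hf using hready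
  obtain ⟨i₁, hi₁⟩ : ∃ i, i ∉ P := by simpa [Finset.eq_univ_iff_forall] using hP
  have : Nonempty {i | i ∉ P} := ⟨⟨i₁, hi₁⟩⟩
  obtain ⟨⟨a, ha⟩, hfa⟩ := (hG.induce {i | i ∉ P}).exists_apply_apply_eq
    (fun u => ⟨f u, (hf u u.2).2.2⟩) fun u => (hf u u.2).1.symm
  replace hfa : f (f a) = a := congrArg Subtype.val hfa
  obtain ⟨hba, hba_rel, hb⟩ := hf a ha
  obtain ⟨-, hab_rel, -⟩ := hf (f a) hb
  rw [hfa] at hab_rel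
  refine ⟨_, _, (Finset.ssubset_insert ha).trans_subset (Finset.subset_insert _ _),
    h.insert_update_pair hpI hpS hG hsp ha hb hba.symm ?_ ?_ hba_rel hab_rel⟩
  · simpa only [hσ a ha] using ho a
  · simpa only [hσ (f a) hb] using ho (f a)

lemma PartialSolution.exists_univ (h : PartialSolution G pI pS q P μ)
    (hpI : ValidStudentPrefs pI) (hpS : ValidSchoolPrefs pS) (hG : G.IsAcyclic)
    (hsp : ∀ s : S, SinglePeakedOn G (fun i i' => pS s (some i) (some i'))) :
    ∃ μ', PartialSolution G pI pS q Finset.univ μ' := by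
  classical
  let reached := Finset.univ.filter fun P' : Finset I => ∃ μ', PartialSolution G pI pS q P' μ'
  obtain ⟨P', hP'⟩ := reached.exists_maximal ⟨P, by simpa [reached] using ⟨μ, h⟩⟩
  obtain ⟨μ', hμ'⟩ := (Finset.mem_filter.mp hP'.1).2
  by_cases hu : P' = Finset.univ
  · exact ⟨μ', hu ▸ hμ'⟩
  obtain ⟨P'', μ'', hlt, h''⟩ := hμ'.exists_ssuperset hpI hpS hG hsp hu
  exact absurd (hP'.2 (by simpa [reached] using ⟨μ'', h''⟩) hlt.le) hlt.not_ge

end Termination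

lemma PartialSolution.feasible_paretoEfficient_lef_mutuallyBest {I S : Type*} [Fintype I]
    {G : SimpleGraph I} {pI : StudentPrefs I S} {pS : SchoolPrefs I S} {q : S → ℕ}
    {μ : I → Option S} (h : PartialSolution G pI pS q Finset.univ μ) (hpI : ValidStudentPrefs pI) :
    Feasible q μ ∧ ParetoEfficient pI q μ ∧ LEF G pI pS μ ∧ MutuallyBest pI pS μ := by
  refine ⟨fun s => by simpa [assigned] using h.feasible s, ?_, ?_,
    fun i s hs => (h.mutuallyBest i s hs).2⟩
  · rintro ν hν ⟨hweak, j, hj⟩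
    have := hpI j
    rw [h.efficient ν hν (fun j _ => hweak j) j (Finset.mem_univ j)] at hj
    exact irrefl_of (pI j) _ hj
  · rintro i i' ⟨⟨s, hs, hpref, hrel⟩, hadj⟩
    have := hpI i
    rcases (h.locallyEnvyFree i' (Finset.mem_univ i') s hs i hadj hrel).2 with hμi | hμi
    · exact irrefl_of (pI i) _ (hμi ▸ hpref)
    · exact asymm_of (pI i) hpref hμi

theorem pe_lef_mb_exists_on_tree_general {I S : Type*} [Fintype I] [Fintype S]
    (G : SimpleGraph I) (hT : G.IsTree)
    (pI : StudentPrefs I S) (pS : SchoolPrefs I S) (q : S → ℕ)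
    (hpI : ValidStudentPrefs pI) (hpS : ValidSchoolPrefs pS)
    (hq : ∀ s, 1 ≤ q s)
    (hsp : ∀ s : S, SinglePeakedOn G (fun i i' => pS s (some i) (some i'))) :
    ∃ μ : I → Option S, Feasible q μ ∧ ParetoEfficient pI q μ ∧
      LEF G pI pS μ ∧ MutuallyBest pI pS μ := by
  obtain ⟨P, μ₀, h₀⟩ := exists_partialSolution G hpI hpS hq
  obtain ⟨μ, h⟩ := h₀.exists_univ hpI hpS hT.isAcyclic hsp
  exact ⟨μ, h.feasible_paretoEfficient_lef_mutuallyBest hpI⟩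

/-- if the acquaintance graph is a tree, every school has quota at least one,
and each school's preference restricted to students is single-peaked on the tree, then a
feasible matching exists that is Pareto efficient, locally envy-free, and mutually-best. -/
theorem pe_lef_mb_exists_on_tree {I S : Type*} [Fintype I] [Fintype S] [Nonempty I]
    (G : SimpleGraph I) (hT : G.IsTree)
    (pI : StudentPrefs I S) (pS : SchoolPrefs I S) (q : S → ℕ)
    (hpI : ValidStudentPrefs pI) (hpS : ValidSchoolPrefs pS)
    (hq : ∀ s, 1 ≤ q s)
    (hsp : ∀ s : S, SinglePeakedOn G (fun i i' => pS s (some i) (some i'))) :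
    ∃ μ : I → Option S, Feasible q μ ∧ ParetoEfficient pI q μ ∧
      LEF G pI pS μ ∧ MutuallyBest pI pS μ :=
  pe_lef_mb_exists_on_tree_general G hT pI pS q hpI hpS hq hsp
end

section
/- Fix a finite set I of students, a finite set S of schools, schools' preferences, quotas, and a student acquaintance graph G of treewidth at most k. Then there exists a mechanism (a function assigning a feasible matching to every profile of students' strict linear orders on S ∪ {∅}) that is strategyproof and whose output matching is Pareto efficient and locally ERF-k for every profile of students' preferences. -/
/-!
Root a tree decomposition of width `k` and list the students by decreasing depth of the
topmost node of their subtree. Two subtrees that meet contain the topmost node of the deeper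
one, so every neighbour of a student listed after her lies in her topmost bag: the order is
`k`-degenerate. Serial dictatorship along this order is strategyproof and Pareto efficient,
and a student can only be envied by neighbours choosing after her, of whom there are at most `k`.
-/

namespace SimpleGraph

variable {V : Type*} {T : SimpleGraph V}

theorem Walk.IsPath.append {u v w : V} {p : T.Walk u v} {q : T.Walk v w} (hp : p.IsPath)
    (hq : q.IsPath) (h : ∀ x ∈ p.support, x ∈ q.support → x = v) : (p.append q).IsPath := by
  have hq' : (v :: q.support.tail).Nodup := q.cons_tail_support ▸ hq.support_nodup
  rw [Walk.isPath_def, Walk.support_append]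
  refine hp.support_nodup.append hq'.of_cons fun x hxp hxq => ?_
  obtain rfl := h x hxp (q.cons_tail_support ▸ List.mem_cons_of_mem v hxq)
  exact (List.nodup_cons.mp hq').1 hxq

theorem exists_isPath_of_connected_induce {C : Set V} (hC : (T.induce C).Connected) {a b : V}
    (ha : a ∈ C) (hb : b ∈ C) : ∃ p : T.Walk a b, p.IsPath ∧ ∀ x ∈ p.support, x ∈ C := by
  classical
  obtain ⟨w⟩ := hC.preconnected ⟨a, ha⟩ ⟨b, hb⟩
  let w' : T.Walk a b := w.map (Embedding.induce C).toHom
  refine ⟨w'.bypass, w'.bypass_isPath, fun x hx => ?_⟩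
  obtain ⟨y, -, rfl⟩ := List.mem_map.mp (w.support_map _ ▸ w'.support_bypass_subset_support hx)
  exact y.2

namespace IsTree

theorem length_eq_dist_of_isPath (hT : T.IsTree) {a b : V} {p : T.Walk a b} (hp : p.IsPath) :
    p.length = T.dist a b := by
  obtain ⟨p₀, hp₀, hlen⟩ := hT.connected.exists_path_of_dist a b
  rw [Subtype.mk.inj <| hT.isAcyclic.subsingleton_path a b |>.elim ⟨p, hp⟩ ⟨p₀, hp₀⟩, hlen]

theorem dist_add_dist_of_mem_support (hT : T.IsTree) {a b x : V} {p : T.Walk a b}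
    (hp : p.IsPath) (hx : x ∈ p.support) : T.dist a x + T.dist x b = T.dist a b := by
  obtain ⟨p₁, p₂, hp₁, hp₂, rfl⟩ := hp.mem_support_iff_exists_append.mp hx
  rw [← hT.length_eq_dist_of_isPath hp₁, ← hT.length_eq_dist_of_isPath hp₂,
    ← hT.length_eq_dist_of_isPath hp, Walk.length_append]

theorem eq_of_mem_support_of_dist_le (hT : T.IsTree) {a b x : V} {p : T.Walk a b}
    (hp : p.IsPath) (hx : x ∈ p.support) (hle : T.dist a b ≤ T.dist a x) : x = b := by
  have := hT.dist_add_dist_of_mem_support hp hx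
  exact hT.connected.dist_eq_zero_iff.mp (by omega)

theorem exists_isPath_through_nearest (hT : T.IsTree) {C : Set V}
    (hC : (T.induce C).Connected) {r c b : V} (hc : c ∈ C)
    (hcmin : ∀ t ∈ C, T.dist r c ≤ T.dist r t) (hb : b ∈ C) :
    ∃ (p : T.Walk r c) (q : T.Walk c b), (p.append q).IsPath ∧ ∀ x ∈ q.support, x ∈ C := by
  obtain ⟨p, hp, -⟩ := hT.connected.exists_path_of_dist r c
  obtain ⟨q, hq, hqC⟩ := exists_isPath_of_connected_induce hC hc hb
  refine ⟨p, q, hp.append hq fun x hxp hxq => ?_, hqC⟩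
  exact hT.eq_of_mem_support_of_dist_le hp hxp (hcmin x (hqC x hxq))

theorem mem_of_nearest_of_inter (hT : T.IsTree) {C C' : Set V} (hC : (T.induce C).Connected)
    (hC' : (T.induce C').Connected) {r c c' b : V} (hc : c ∈ C)
    (hcmin : ∀ t ∈ C, T.dist r c ≤ T.dist r t) (hc' : c' ∈ C')
    (hcmin' : ∀ t ∈ C', T.dist r c' ≤ T.dist r t) (hb : b ∈ C) (hb' : b ∈ C')
    (hle : T.dist r c' ≤ T.dist r c) : c ∈ C' := by
  obtain ⟨p, q, hpq, -⟩ := hT.exists_isPath_through_nearest hC hc hcmin hb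
  obtain ⟨p', q', hpq', hq'C'⟩ := hT.exists_isPath_through_nearest hC' hc' hcmin' hb'
  have hc_mem : c ∈ (p'.append q').support := by
    rw [← Subtype.mk.inj <| hT.isAcyclic.subsingleton_path r b |>.elim ⟨_, hpq⟩ ⟨_, hpq'⟩]
    exact p.support_subset_support_append_left q p.end_mem_support
  rcases (p'.mem_support_append_iff q').mp hc_mem with hcp' | hcq'
  · rw [hT.eq_of_mem_support_of_dist_le hpq'.of_append_left hcp' hle]
    exact hc'
  · exact hq'C' c hcq'

end IsTree

end SimpleGraph

theorem degenerate_of_ncard_adj_le {I : Type*} [Finite I] {G : SimpleGraph I} {k : ℕ}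
    (f : I → ℕ) (h : ∀ i, {i' | G.Adj i i' ∧ f i' ≤ f i}.ncard ≤ k) : Degenerate G k := by
  cases nonempty_fintype I
  obtain ⟨D, hD⟩ := Finite.exists_le f
  obtain ⟨n, ⟨e⟩⟩ : ∃ n, Nonempty (I ≃ Fin n) := Finite.exists_equiv_fin I
  -- students are listed by decreasing `f`, ties broken by `e`
  have hmod : ∀ i, (e i + n * (D - f i)) % n = e i := fun i => by
    rw [Nat.add_mul_mod_self_left, Nat.mod_eq_of_lt (e i).isLt]
  have hdiv : ∀ i, (e i + n * (D - f i)) / n = D - f i := fun i => by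
    rw [Nat.add_mul_div_left _ _ (Fin.pos (e i)), Nat.div_eq_of_lt (e i).isLt, zero_add]
  refine ⟨fun i => e i + n * (D - f i), fun a b hab => ?_, fun i => ?_⟩
  · exact e.injective (Fin.ext (hmod a ▸ hmod b ▸ congrArg (· % n) hab))
  · refine le_trans (Set.ncard_le_ncard ?_) (h i)
    rintro i' ⟨hadj, hlt⟩
    have hle : (e i + n * (D - f i)) / n ≤ (e i' + n * (D - f i')) / n :=
      Nat.div_le_div_right hlt.le
    rw [hdiv, hdiv] at hle
    exact ⟨hadj, by have := hD i'; omega⟩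

theorem TreewidthAtMost.degenerate {I : Type*} [Finite I] {G : SimpleGraph I} {k : ℕ}
    (hG : TreewidthAtMost G k) : Degenerate G k := by
  obtain ⟨V, T, bag, hV, hdec, hsize⟩ := hG
  obtain ⟨r⟩ := hdec.tree.connected.nonempty
  have hnearest (i : I) :
      ∃ c ∈ {t | i ∈ bag t}, ∀ t ∈ {t | i ∈ bag t}, T.dist r c ≤ T.dist r t :=
    Set.exists_min_image _ _ (Set.toFinite _) (hdec.covers i)
  choose u hu humin using hnearest
  refine degenerate_of_ncard_adj_le (fun i => T.dist r (u i)) fun i => ?_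
  have hsub : {i' | G.Adj i i' ∧ T.dist r (u i') ≤ T.dist r (u i)} ⊆ bag (u i) \ {i} := by
    rintro i' ⟨hadj, hle⟩
    obtain ⟨b, hb, hb'⟩ := hdec.edges hadj
    exact ⟨hdec.tree.mem_of_nearest_of_inter (hdec.subtree i) (hdec.subtree i') (hu i)
      (humin i) (hu i') (humin i') hb hb' hle, (G.ne_of_adj hadj).symm⟩
  calc _ ≤ (bag (u i) \ {i}).ncard := Set.ncard_le_ncard hsub
    _ = (bag (u i)).ncard - 1 := Set.ncard_sdiff_singleton_of_mem (hu i)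
    _ ≤ k := by have := hsize (u i); omega

section Best

variable {α : Type*} {r : α → α → Prop} {A : Set α} {x y : α}

def IsBestIn (r : α → α → Prop) (A : Set α) (x : α) : Prop :=
  x ∈ A ∧ ∀ y ∈ A, y ≠ x → r x y

theorem exists_isBestIn [Finite α] [IsStrictTotalOrder α r] (hA : A.Nonempty) :
    ∃ x, IsBestIn r A x := by
  obtain ⟨x, hx, hmin⟩ := (Finite.wellFounded_of_trans_of_irrefl r).has_min A hA
  refine ⟨x, hx, fun y hy hne => ?_⟩
  rcases trichotomous_of r x y with h | rfl | h
  · exact h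
  · exact absurd rfl hne
  · exact absurd h (hmin y hy)

theorem IsBestIn.not_rel [IsStrictOrder α r] (hx : IsBestIn r A x) (hy : y ∈ A) : ¬ r y x := by
  rcases eq_or_ne y x with rfl | hne
  · exact irrefl y
  · exact asymm (hx.2 y hy hne)

noncomputable def best [Nonempty α] (r : α → α → Prop) (A : Set α) : α :=
  Classical.epsilon (IsBestIn r A)

theorem isBestIn_best [Nonempty α] [Finite α] [IsStrictTotalOrder α r] (hA : A.Nonempty) :
    IsBestIn r A (best r A) :=
  Classical.epsilon_spec (exists_isBestIn hA)

end Best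

section SerialDictatorship

variable {I S : Type*} (pI : StudentPrefs I S) (q : S → ℕ) (ord : I → ℕ)

/-- The options left to the student in position `m` of `ord` when the students before her
hold the seats assigned by `μ`. -/
def available (μ : I → Option S) (m : ℕ) : Set (Option S) :=
  {x | ∀ s ∈ x, {i | ord i < m ∧ μ i = some s}.ncard < q s}

/-- Serial dictatorship run on the positions `0, …, m - 1` of `ord`. -/
noncomputable def serialDictatorshipUpTo : ℕ → I → Option S
  | 0, _ => none
  | m + 1, i =>
      if ord i = m then best (pI i) (available q ord (serialDictatorshipUpTo m) m)
      else serialDictatorshipUpTo m i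

noncomputable def serialDictatorship (i : I) : Option S :=
  serialDictatorshipUpTo pI q ord (ord i + 1) i

variable {pI q ord}

theorem none_mem_available (μ : I → Option S) (m : ℕ) : none ∈ available q ord μ m :=
  fun _ h => absurd h (Option.not_mem_none _)

theorem available_anti [Finite I] {μ : I → Option S} {m m' : ℕ} (h : m' ≤ m) :
    available q ord μ m ⊆ available q ord μ m' := by
  intro x hx s hs
  refine lt_of_le_of_lt (Set.ncard_le_ncard ?_) (hx s hs)
  exact fun i hi => ⟨lt_of_lt_of_le hi.1 h, hi.2⟩

theorem available_congr {μ μ' : I → Option S} {m : ℕ} (h : ∀ i, ord i < m → μ i = μ' i) :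
    available q ord μ m = available q ord μ' m := by
  have hseats (s : S) : {i | ord i < m ∧ μ i = some s} = {i | ord i < m ∧ μ' i = some s} :=
    Set.ext fun i => and_congr_right fun hi => by rw [h i hi]
  simp only [available, hseats]

theorem serialDictatorshipUpTo_eq_of_lt {i : I} {m : ℕ} (h : ord i < m) :
    serialDictatorshipUpTo pI q ord m i = serialDictatorship pI q ord i := by
  induction m with
  | zero => omega
  | succ m ih =>
    rcases (Nat.lt_succ_iff_lt_or_eq.mp h) with h | rfl
    · simp only [serialDictatorshipUpTo, if_neg h.ne, ih h]
    · rfl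

theorem serialDictatorshipUpTo_congr {pI' : StudentPrefs I S} {m : ℕ}
    (h : ∀ i, ord i < m → pI' i = pI i) :
    serialDictatorshipUpTo pI' q ord m = serialDictatorshipUpTo pI q ord m := by
  induction m with
  | zero => rfl
  | succ m ih =>
    funext i
    rw [serialDictatorshipUpTo, serialDictatorshipUpTo, ih fun j hj => h j (by omega)]
    split_ifs with hi
    · rw [h i (by omega)]
    · rfl

theorem serialDictatorship_eq_best (i : I) :
    serialDictatorship pI q ord i =
      best (pI i) (available q ord (serialDictatorship pI q ord) (ord i)) := by
  rw [serialDictatorship, serialDictatorshipUpTo, if_pos rfl,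
    available_congr fun j hj => serialDictatorshipUpTo_eq_of_lt hj]

theorem isBestIn_serialDictatorship [Finite S] (hpI : ValidStudentPrefs pI) (i : I) :
    IsBestIn (pI i) (available q ord (serialDictatorship pI q ord) (ord i))
      (serialDictatorship pI q ord i) := by
  have := hpI i
  rw [serialDictatorship_eq_best]
  exact isBestIn_best ⟨none, none_mem_available _ _⟩

theorem feasible_serialDictatorship [Finite I] [Finite S] (hpI : ValidStudentPrefs pI)
    (hord : Function.Injective ord) : Feasible q (serialDictatorship pI q ord) := by
  intro s
  by_contra! hgt
  set X := {i | serialDictatorship pI q ord i = some s}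
  obtain ⟨i, hi, hlast⟩ := Set.exists_max_image X ord (Set.toFinite X)
    (Set.nonempty_of_ncard_ne_zero (by omega))
  have hbefore : X \ {i} ⊆ {j | ord j < ord i ∧ serialDictatorship pI q ord j = some s} :=
    fun j ⟨hj, hji⟩ => ⟨lt_of_le_of_ne (hlast j hj) (hord.ne hji), hj⟩
  have hseat := (isBestIn_serialDictatorship hpI i).1 s hi
  have := Set.ncard_le_ncard hbefore
  rw [Set.ncard_sdiff_singleton_of_mem hi] at this
  omega

theorem strategyproof_serialDictatorship [Finite S] :
    Strategyproof fun pI : StudentPrefs I S => serialDictatorship pI q ord := by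
  intro pI hpI i pI' hpI' hothers
  have hbefore : ∀ j, ord j < ord i →
      serialDictatorship pI q ord j = serialDictatorship pI' q ord j := fun j hj => by
    rw [← serialDictatorshipUpTo_eq_of_lt hj, ← serialDictatorshipUpTo_eq_of_lt hj,
      serialDictatorshipUpTo_congr fun j' hj' => hothers j' (ne_of_apply_ne ord hj'.ne)]
  have hbest := isBestIn_serialDictatorship (q := q) (ord := ord) hpI i
  have hbest' := isBestIn_serialDictatorship (q := q) (ord := ord) hpI' i
  rw [available_congr hbefore] at hbest
  rcases eq_or_ne (serialDictatorship pI' q ord i) (serialDictatorship pI q ord i) with h | h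
  · exact Or.inl h.symm
  · exact Or.inr (hbest.2 _ hbest'.1 h)

theorem paretoEfficient_serialDictatorship [Finite I] [Finite S] (hpI : ValidStudentPrefs pI) :
    ParetoEfficient pI q (serialDictatorship pI q ord) := by
  rintro μ hμ ⟨hweak, j, hj⟩
  set σ := serialDictatorship pI q ord
  obtain ⟨i, hi, hfirst⟩ := Set.exists_min_image {i | μ i ≠ σ i} ord (Set.toFinite _)
    ⟨j, fun h => (hpI j).irrefl _ (h ▸ hj)⟩
  have hagree : ∀ j, ord j < ord i → σ j = μ j := fun j hj =>
    (not_not.mp fun hne => (hfirst j (Ne.symm hne)).not_gt hj)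
  have := hpI i
  have hfull : μ i ∉ available q ord σ (ord i) := fun h =>
    (isBestIn_serialDictatorship hpI i).not_rel h ((hweak i).resolve_left hi)
  obtain ⟨s, hs, hfull⟩ : ∃ s ∈ μ i, q s ≤ {j | ord j < ord i ∧ σ j = some s}.ncard := by
    simpa [available] using hfull
  have hseats : insert i {j | ord j < ord i ∧ σ j = some s} ⊆ {j | μ j = some s} := by
    rintro j (rfl | ⟨hj, hσj⟩)
    · exact hs
    · exact (hagree j hj).symm.trans hσj
  have := Set.ncard_le_ncard hseats
  rw [Set.ncard_insert_of_notMem fun h => lt_irrefl _ h.1] at this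
  have := hμ s
  omega

theorem locERF_serialDictatorship [Finite I] [Finite S] {G : SimpleGraph I}
    (pS : SchoolPrefs I S) {k : ℕ} (hpI : ValidStudentPrefs pI)
    (hdeg : ∀ i, {i' | G.Adj i i' ∧ ord i < ord i'}.ncard ≤ k) :
    LocERF G pI pS k (serialDictatorship pI q ord) := by
  intro i
  refine le_trans (Set.ncard_le_ncard ?_) (hdeg i)
  rintro i' ⟨⟨s, hs, hpref, -⟩, hadj⟩
  refine ⟨hadj.symm, lt_of_not_ge fun hle => ?_⟩
  -- `i'` chose no later than `i`, so the seat at `s` that `i` took was still open to `i'`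
  have hopen : some s ∈ available q ord (serialDictatorship pI q ord) (ord i') :=
    available_anti hle (hs ▸ (isBestIn_serialDictatorship hpI i).1)
  have := hpI i'
  exact (isBestIn_serialDictatorship hpI i').not_rel hopen hpref

end SerialDictatorship

theorem sp_pe_locerf_mechanism_treewidth_general {I S : Type*} [Fintype I] [Fintype S]
    (k : ℕ) (G : SimpleGraph I) (hG : TreewidthAtMost G k)
    (pS : SchoolPrefs I S) (q : S → ℕ) :
    ∃ f : StudentPrefs I S → (I → Option S),
      (∀ pI, ValidStudentPrefs pI → Feasible q (f pI)) ∧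
      Strategyproof f ∧
      ∀ pI, ValidStudentPrefs pI →
        ParetoEfficient pI q (f pI) ∧ LocERF G pI pS k (f pI) := by
  obtain ⟨ord, hord, hdeg⟩ := hG.degenerate
  exact ⟨fun pI => serialDictatorship pI q ord,
    fun _ hpI => feasible_serialDictatorship hpI hord,
    strategyproof_serialDictatorship,
    fun _ hpI => ⟨paretoEfficient_serialDictatorship hpI,
      locERF_serialDictatorship pS hpI hdeg⟩⟩

/-- for any fixed schools' preferences, quotas, and acquaintance graph of
treewidth at most `k`, there exists a strategyproof mechanism whose output matching is
always feasible, Pareto efficient, and locally ERF-k. -/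
theorem sp_pe_locerf_mechanism_treewidth {I S : Type*} [Fintype I] [Fintype S] [Nonempty I]
    (k : ℕ) (G : SimpleGraph I) (hG : TreewidthAtMost G k)
    (pS : SchoolPrefs I S) (q : S → ℕ) (hpS : ValidSchoolPrefs pS) :
    ∃ f : StudentPrefs I S → (I → Option S),
      (∀ pI, ValidStudentPrefs pI → Feasible q (f pI)) ∧
      Strategyproof f ∧
      ∀ pI, ValidStudentPrefs pI →
        ParetoEfficient pI q (f pI) ∧ LocERF G pI pS k (f pI) :=
  sp_pe_locerf_mechanism_treewidth_general k G hG pS q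
end
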